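/- arXiv:1304.6271 — 4 statements merged into one kernel-verified Lean document; each statement's English description precedes it below -/
import Mathlib

section
/- For all r, s > 0, all x ∈ X and every bounded Borel function f : X → ℝ, the averaging operators satisfy Q_r(Q_s f)(x) = Q_s(Q_r f)(x) = Q_{max{r,s}} f(x); in particular each Q_r is idempotent. -/
open MeasureTheory Metric Filter
open scoped ENNReal Classical

/-- The averaging operator `Q_r f(x) = μ(B_r(x))⁻¹ ∫_{B_r(x)} f dμ`. -/
noncomputable def avgOp {X : Type*} [MetricSpace X] [MeasurableSpace X]
    (μ : Measure X) (r : ℝ) (f : X → ℝ) (x : X) : ℝ :=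
  (μ (closedBall x r)).toReal⁻¹ * ∫ y in closedBall x r, f y ∂μ

/-- The isotropic Markov operator `P^t f(x) = ∫_[0,∞) Q_r f(x) dσ^t(r)`,
where `νt` is the Lebesgue–Stieltjes measure of `σ^t`. -/
noncomputable def isoOp {X : Type*} [MetricSpace X] [MeasurableSpace X]
    (μ : Measure X) (νt : Measure ℝ) (f : X → ℝ) (x : X) : ℝ :=
  ∫ r in Set.Ici (0:ℝ), avgOp μ r f x ∂νt

/-- The heat kernel `p(t,x,y) = ∫_[d(x,y),∞) μ(B_r(x))⁻¹ dσ^t(r)`. -/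
noncomputable def heatK {X : Type*} [MetricSpace X] [MeasurableSpace X]
    (μ : Measure X) (ν : ℝ → Measure ℝ) (t : ℝ) (x y : X) : ℝ≥0∞ :=
  ∫⁻ r in Set.Ici (dist x y), (μ (closedBall x r))⁻¹ ∂(ν t)

/-- The intrinsic ultra-metric `d_*(x,y) = 1/log(1/σ(d(x,y)))` for `x ≠ y`. -/
noncomputable def dstar {X : Type*} [MetricSpace X] (σ : ℝ → ℝ) (x y : X) : ℝ :=
  if x = y then 0 else 1 / Real.log (1 / σ (dist x y))

/-- The closed ball `B*_s(x)` of the intrinsic ultra-metric. -/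
def starBall {X : Type*} [MetricSpace X] (σ : ℝ → ℝ) (x : X) (s : ℝ) : Set X :=
  {y | dstar σ x y ≤ s}

/-- The spectral distribution function `N(x,τ) = 1/μ(B*_{1/τ}(x))`. -/
noncomputable def specN {X : Type*} [MetricSpace X] [MeasurableSpace X]
    (μ : Measure X) (σ : ℝ → ℝ) (x : X) (τ : ℝ) : ℝ≥0∞ :=
  (μ (starBall σ x (1 / τ)))⁻¹

/-- The Green function `g(x,y) = ∫_0^∞ p(t,x,y) dt`. -/
noncomputable def greenF {X : Type*} [MetricSpace X] [MeasurableSpace X]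
    (μ : Measure X) (ν : ℝ → Measure ℝ) (x y : X) : ℝ≥0∞ :=
  ∫⁻ t in Set.Ioi (0:ℝ), heatK μ ν t x y

/-!
In an ultrametric space every point of a closed ball is a centre of it, so `Q_s f` is constant on
each `s`-ball. For `r ≤ s` the ball `B_r(x)` lies in `B_s(x)`, on which `Q_s f` is the constant
`Q_s f(x)`, so `Q_r (Q_s f)(x) = Q_s f(x)`. For `s ≤ r` the compact ball `B_r(x)` is a finite
disjoint union of `s`-balls (any two are equal or disjoint), and on each of them
`Q_s f` has the same integral as `f`; hence `∫_{B_r(x)} Q_s f = ∫_{B_r(x)} f`.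
-/

namespace IsUltrametricDist

variable {X : Type*} [PseudoMetricSpace X] [IsUltrametricDist X]

lemma closedBall_subset_closedBall_of_mem {x y : X} {r s : ℝ} (hsr : s ≤ r)
    (hy : y ∈ closedBall x r) : closedBall y s ⊆ closedBall x r :=
  closedBall_eq_of_mem hy ▸ closedBall_subset_closedBall hsr

lemma exists_finset_closedBall_partition {K : Set X} (hK : IsCompact K) {s : ℝ} (hs : 0 < s)
    (hKs : ∀ y ∈ K, closedBall y s ⊆ K) :
    ∃ S : Finset (Set X), K = ⋃ B ∈ S, B ∧ (S : Set (Set X)).Pairwise Disjoint ∧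
      ∀ B ∈ S, ∃ y ∈ K, B = closedBall y s := by
  obtain ⟨t, htK, hKt⟩ :=
    hK.elim_nhds_subcover (closedBall · s) fun y _ ↦ closedBall_mem_nhds y hs
  refine ⟨t.image (closedBall · s), ?_, ?_, ?_⟩
  · rw [Finset.set_biUnion_finset_image]
    exact hKt.antisymm (Set.iUnion₂_subset fun y hy ↦ hKs y (htK y hy))
  · rintro _ hB _ hB' hne
    obtain ⟨a, -, rfl⟩ := Finset.mem_image.mp hB
    obtain ⟨b, -, rfl⟩ := Finset.mem_image.mp hB'
    exact (closedBall_eq_or_disjoint a b s).resolve_left hne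
  · intro B hB
    obtain ⟨y, hy, rfl⟩ := Finset.mem_image.mp hB
    exact ⟨y, htK y hy, rfl⟩

end IsUltrametricDist

open IsUltrametricDist

section Averaging

variable {X : Type*} [MetricSpace X] [MeasurableSpace X] {μ : Measure X}

lemma avgOp_eq_of_eqOn_const [OpensMeasurableSpace X] {g : X → ℝ} {c : ℝ} {x : X} {r : ℝ}
    (hμ : μ.real (closedBall x r) ≠ 0) (hg : Set.EqOn g (fun _ ↦ c) (closedBall x r)) :
    avgOp μ r g x = c := by
  rw [avgOp, setIntegral_congr_fun measurableSet_closedBall hg, setIntegral_const, smul_eq_mul,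
    ← measureReal_def, inv_mul_cancel_left₀ hμ]

variable [IsUltrametricDist X]

lemma avgOp_eq_of_mem_closedBall (f : X → ℝ) {x y : X} {s : ℝ} (hy : y ∈ closedBall x s) :
    avgOp μ s f y = avgOp μ s f x := by
  rw [avgOp, avgOp, closedBall_eq_of_mem hy]

variable [OpensMeasurableSpace X]

lemma avgOp_avgOp_of_le {r s : ℝ} (hrs : r ≤ s) (f : X → ℝ) {x : X}
    (hμ : μ.real (closedBall x r) ≠ 0) :
    avgOp μ r (avgOp μ s f) x = avgOp μ s f x :=
  avgOp_eq_of_eqOn_const hμ fun _ hy ↦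
    avgOp_eq_of_mem_closedBall f (closedBall_subset_closedBall hrs hy)

lemma setIntegral_closedBall_avgOp (f : X → ℝ) (y : X) {s : ℝ}
    (hμ : μ.real (closedBall y s) ≠ 0) :
    ∫ z in closedBall y s, avgOp μ s f z ∂μ = ∫ z in closedBall y s, f z ∂μ := by
  rw [setIntegral_congr_fun measurableSet_closedBall fun _ ↦ avgOp_eq_of_mem_closedBall f,
    setIntegral_const, smul_eq_mul, avgOp, ← measureReal_def, mul_inv_cancel_left₀ hμ]

lemma setIntegral_avgOp_of_isCompact {K : Set X} (hK : IsCompact K) {s : ℝ} (hs : 0 < s)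
    (hKs : ∀ y ∈ K, closedBall y s ⊆ K) (hμ : ∀ y ∈ K, μ.real (closedBall y s) ≠ 0)
    {f : X → ℝ} (hf : IntegrableOn f K μ) :
    ∫ z in K, avgOp μ s f z ∂μ = ∫ z in K, f z ∂μ := by
  obtain ⟨S, rfl, hdisj, hS⟩ := exists_finset_closedBall_partition hK hs hKs
  have hmeas : ∀ B ∈ S, MeasurableSet B := fun B hB ↦ by
    obtain ⟨y, -, rfl⟩ := hS B hB
    exact measurableSet_closedBall
  have hf' : ∀ B ∈ S, IntegrableOn f B μ := fun B hB ↦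
    hf.mono_set (Finset.subset_set_biUnion_of_mem (f := id) hB)
  have havg : ∀ B ∈ S, IntegrableOn (avgOp μ s f) B μ := fun B hB ↦ by
    obtain ⟨y, hy, rfl⟩ := hS B hB
    exact (integrableOn_const (ENNReal.toReal_ne_zero.mp (hμ y hy)).2).congr_fun
      (fun z hz ↦ (avgOp_eq_of_mem_closedBall f hz).symm) measurableSet_closedBall
  rw [integral_biUnion_finset S hmeas hdisj havg, integral_biUnion_finset S hmeas hdisj hf']
  refine Finset.sum_congr rfl fun B hB ↦ ?_
  obtain ⟨y, hy, rfl⟩ := hS B hB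
  exact setIntegral_closedBall_avgOp f y (hμ y hy)

lemma avgOp_avgOp_of_ge {r s : ℝ} (hs : 0 < s) (hsr : s ≤ r) {x : X}
    (hcompact : IsCompact (closedBall x r))
    (hμ : ∀ y ∈ closedBall x r, μ.real (closedBall y s) ≠ 0)
    {f : X → ℝ} (hf : IntegrableOn f (closedBall x r) μ) :
    avgOp μ r (avgOp μ s f) x = avgOp μ r f x := by
  rw [avgOp, avgOp, setIntegral_avgOp_of_isCompact hcompact hs
    (fun _ ↦ closedBall_subset_closedBall_of_mem hsr) hμ hf]

lemma avgOp_avgOp {r s : ℝ} (hr : 0 < r) (hs : 0 < s) {x : X}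
    (hcompact : ∀ (y : X) t, IsCompact (closedBall y t))
    (hμ : ∀ y t, 0 < t → μ.real (closedBall y t) ≠ 0)
    {f : X → ℝ} (hf : ∀ y t, 0 < t → IntegrableOn f (closedBall y t) μ) :
    avgOp μ r (avgOp μ s f) x = avgOp μ (max r s) f x := by
  rcases le_total r s with hrs | hsr
  · rw [max_eq_right hrs, avgOp_avgOp_of_le hrs f (hμ x r hr)]
  · rw [max_eq_left hsr,
      avgOp_avgOp_of_ge hs hsr (hcompact x r) (fun y _ ↦ hμ y s hs) (hf x r hr)]

end Averaging

theorem statement_0_general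
    {X : Type*} [MetricSpace X]
    [MeasurableSpace X] [BorelSpace X]
    (hd : ∀ x y z : X, dist x z ≤ max (dist x y) (dist y z))
    (hcb : ∀ (x : X) (r : ℝ), IsCompact (closedBall x r))
    (μ : Measure X)
    (hμpos : ∀ (x : X) (r : ℝ), 0 < r → 0 < μ (closedBall x r))
    (hμfin : ∀ (x : X) (r : ℝ), 0 < r → μ (closedBall x r) < ⊤)
    (f : X → ℝ) (hf : Measurable f) (hfb : ∃ M : ℝ, ∀ x : X, |f x| ≤ M)
    (r s : ℝ) (hr : 0 < r) (hs : 0 < s) (x : X) :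
    avgOp μ r (avgOp μ s f) x = avgOp μ (max r s) f x ∧
    avgOp μ s (avgOp μ r f) x = avgOp μ (max r s) f x ∧
    avgOp μ r (avgOp μ r f) x = avgOp μ r f x := by
  have : IsUltrametricDist X := ⟨hd⟩
  have hμ : ∀ y t, 0 < t → μ.real (closedBall y t) ≠ 0 := fun y t ht ↦
    ENNReal.toReal_ne_zero.mpr ⟨(hμpos y t ht).ne', (hμfin y t ht).ne⟩
  obtain ⟨M, hM⟩ := hfb
  have hfint : ∀ y t, 0 < t → IntegrableOn f (closedBall y t) μ := fun y t ht ↦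
    Measure.integrableOn_of_bounded (hμfin y t ht).ne hf.aestronglyMeasurable
      (M := M) (Eventually.of_forall fun z ↦ hM z)
  refine ⟨avgOp_avgOp hr hs hcb hμ hfint, ?_, ?_⟩
  · rw [max_comm]
    exact avgOp_avgOp hs hr hcb hμ hfint
  · simpa only [max_self] using avgOp_avgOp hr hr hcb hμ hfint (x := x)

theorem statement_0
    {X : Type*} [MetricSpace X] [TopologicalSpace.SeparableSpace X]
    [MeasurableSpace X] [BorelSpace X]
    (hd : ∀ x y z : X, dist x z ≤ max (dist x y) (dist y z))
    (hcb : ∀ (x : X) (r : ℝ), IsCompact (closedBall x r))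
    (μ : Measure X)
    (hμpos : ∀ (x : X) (r : ℝ), 0 < r → 0 < μ (closedBall x r))
    (hμfin : ∀ (x : X) (r : ℝ), 0 < r → μ (closedBall x r) < ⊤)
    (f : X → ℝ) (hf : Measurable f) (hfb : ∃ M : ℝ, ∀ x : X, |f x| ≤ M)
    (r s : ℝ) (hr : 0 < r) (hs : 0 < s) (x : X) :
    avgOp μ r (avgOp μ s f) x = avgOp μ (max r s) f x ∧
    avgOp μ s (avgOp μ r f) x = avgOp μ (max r s) f x ∧
    avgOp μ r (avgOp μ r f) x = avgOp μ r f x :=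
  statement_0_general hd hcb μ hμpos hμfin f hf hfb r s hr hs x
end

section
/- For every t > 0, every bounded Borel function f : X → ℝ and every x ∈ X, P^t f(x) = ∫_X p(t,x,y) f(y) dμ(y), where p(t,x,y) = ∫_{[d(x,y),∞)} μ(B_r(x))^{-1} dσ^t(r) is the heat kernel. -/
/-!
Since `y ∈ B_r(x)` iff `r ≥ d(x,y)`, Tonelli's theorem applied to
`(r, y) ↦ 1_{d(x,y) ≤ r} μ(B_r(x))⁻¹ f(y)` exchanges the `dσ^t(r)` and `dμ(y)` integrations and
turns `P^t f(x)` into `∫ p(t,x,y) f(y) dμ(y)`. This is done in `ℝ≥0∞` for the positive and negative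
parts of `f`; as `f` is bounded and `σ^t` has mass at most one on `[0,∞)`, all the integrals are
finite and the identity passes to real-valued integrals.
-/

open MeasureTheory Metric Filter
open scoped ENNReal Classical

section Kernel

variable {X : Type*} [PseudoMetricSpace X] [MeasurableSpace X] [OpensMeasurableSpace X]

lemma lintegral_mul_setLIntegral_closedBall {μ : Measure X} {ν : Measure ℝ} [SFinite μ]
    [SFinite ν] {w : ℝ → ℝ≥0∞} (hw : Measurable w) {φ : X → ℝ≥0∞} (hφ : Measurable φ)
    (x : X) :
    ∫⁻ r, w r * ∫⁻ y in closedBall x r, φ y ∂μ ∂ν =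
      ∫⁻ y, (∫⁻ r in Set.Ici (dist x y), w r ∂ν) * φ y ∂μ := by
  set S : Set (ℝ × X) := {p | dist x p.2 ≤ p.1}
  have hS : MeasurableSet S :=
    measurableSet_le ((continuous_const.dist continuous_id).measurable.comp measurable_snd)
      measurable_fst
  have hk : Measurable (S.indicator fun p => w p.1 * φ p.2) :=
    ((hw.comp measurable_fst).mul (hφ.comp measurable_snd)).indicator hS
  calc ∫⁻ r, w r * ∫⁻ y in closedBall x r, φ y ∂μ ∂ν
      = ∫⁻ r, ∫⁻ y, S.indicator (fun p => w p.1 * φ p.2) (r, y) ∂μ ∂ν := by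
        refine lintegral_congr fun r => ?_
        rw [← lintegral_indicator measurableSet_closedBall, ← lintegral_const_mul _
          (hφ.indicator measurableSet_closedBall)]
        congr with y
        simp [S, Set.indicator_apply, dist_comm]
    _ = ∫⁻ y, ∫⁻ r, S.indicator (fun p => w p.1 * φ p.2) (r, y) ∂ν ∂μ :=
        lintegral_lintegral_swap hk.aemeasurable
    _ = ∫⁻ y, (∫⁻ r in Set.Ici (dist x y), w r ∂ν) * φ y ∂μ := by
        refine lintegral_congr fun y => ?_
        rw [← lintegral_indicator measurableSet_Ici, ← lintegral_mul_const _
          (hw.indicator measurableSet_Ici)]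
        congr with r
        simp [S, Set.indicator_apply]

end Kernel

lemma sigmaFinite_of_measure_closedBall_ne_top {X : Type*} [PseudoMetricSpace X]
    [MeasurableSpace X] {μ : Measure X} (x : X) (h : ∀ r, μ (closedBall x r) ≠ ∞) :
    SigmaFinite μ :=
  ⟨⟨⟨fun n : ℕ => closedBall x n, fun _ => trivial, fun n => (h n).lt_top,
    iUnion_closedBall_nat x⟩⟩⟩

lemma inv_mul_setLIntegral_le {α : Type*} [MeasurableSpace α] (μ : Measure α) (s : Set α)
    {φ : α → ℝ≥0∞} {C : ℝ≥0∞} (hφ : ∀ a, φ a ≤ C) :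
    (μ s)⁻¹ * ∫⁻ a in s, φ a ∂μ ≤ C :=
  calc (μ s)⁻¹ * ∫⁻ a in s, φ a ∂μ ≤ (μ s)⁻¹ * (C * μ s) := by
        gcongr
        exact (lintegral_mono hφ).trans_eq (setLIntegral_const s C)
    _ = C * ((μ s)⁻¹ * μ s) := by ring
    _ ≤ C := mul_le_of_le_one_right' (ENNReal.inv_mul_le_one _)

lemma measure_Ici_zero_le_one_of_Ico {ν : Measure ℝ} {F : ℝ → ℝ} (hF₀ : 0 ≤ F 0)
    (hF₁ : ∀ r, 0 ≤ r → F r ≤ 1)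
    (hν : ∀ a b, 0 ≤ a → a ≤ b → ν (Set.Ico a b) = ENNReal.ofReal (F b - F a)) :
    ν (Set.Ici 0) ≤ 1 := by
  rw [← Set.iUnion_Ico_right, Monotone.measure_iUnion fun _ _ h => Set.Ico_subset_Ico_right h]
  refine iSup_le fun b => ?_
  rcases lt_or_ge b 0 with hb | hb
  · simp [Set.Ico_eq_empty_of_le hb.le]
  · rw [hν 0 b le_rfl hb]
    exact ENNReal.ofReal_le_one.2 (by linarith [hF₁ b hb])

section Averages

variable {X : Type*} [MetricSpace X] [MeasurableSpace X] {μ : Measure X} {x : X}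

-- Holds also when the ball has measure `0` or `∞`: then both sides vanish.
lemma avgOp_eq_toReal_lintegral {g : X → ℝ} (hg : AEStronglyMeasurable g μ) (hg₀ : 0 ≤ g)
    (r : ℝ) :
    avgOp μ r g x =
      ((μ (closedBall x r))⁻¹ * ∫⁻ y in closedBall x r, ENNReal.ofReal (g y) ∂μ).toReal := by
  rw [avgOp, integral_eq_lintegral_of_nonneg_ae (.of_forall hg₀) hg.restrict,
    ENNReal.toReal_mul, ENNReal.toReal_inv]

lemma avgOp_sub {f g : X → ℝ} {r : ℝ} (hf : IntegrableOn f (closedBall x r) μ)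
    (hg : IntegrableOn g (closedBall x r) μ) :
    avgOp μ r (f - g) x = avgOp μ r f x - avgOp μ r g x := by
  simp only [avgOp, Pi.sub_apply, integral_sub hf hg, mul_sub]

end Averages

section HeatKernel

variable {X : Type*} [MetricSpace X] [MeasurableSpace X] [OpensMeasurableSpace X]
  {μ : Measure X} {ν : Measure ℝ} [IsFiniteMeasure ν] {x : X}

lemma integral_avgOp_eq_integral_heat_of_nonneg [SFinite μ] {g : X → ℝ} (hg : Measurable g)
    (hg₀ : 0 ≤ g) {C : ℝ} (hgC : ∀ y, g y ≤ C) :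
    Integrable (fun r => avgOp μ r g x) ν ∧
      Integrable (fun y => (∫⁻ r in Set.Ici (dist x y), (μ (closedBall x r))⁻¹ ∂ν).toReal * g y) μ ∧
      ∫ r, avgOp μ r g x ∂ν =
        ∫ y, (∫⁻ r in Set.Ici (dist x y), (μ (closedBall x r))⁻¹ ∂ν).toReal * g y ∂μ := by
  set A : ℝ → ℝ≥0∞ := fun r => μ (closedBall x r)
  set G : X → ℝ≥0∞ := fun y => ∫⁻ r in Set.Ici (dist x y), (A r)⁻¹ ∂ν
  set φ : X → ℝ≥0∞ := fun y => ENNReal.ofReal (g y)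
  set Φ : ℝ → ℝ≥0∞ := fun r => (A r)⁻¹ * ∫⁻ y in closedBall x r, φ y ∂μ
  have hA : Monotone A := fun r s h => measure_mono (closedBall_subset_closedBall h)
  have hφ : Measurable φ := ENNReal.measurable_ofReal.comp hg
  have hΦ : Measurable Φ := hA.measurable.inv.mul
    (Monotone.measurable fun r s h => lintegral_mono_set (closedBall_subset_closedBall h))
  have hG : Measurable G :=
    (Antitone.measurable (f := fun d : ℝ => ∫⁻ r in Set.Ici d, (A r)⁻¹ ∂ν)
      fun d e h => lintegral_mono_set (Set.Ici_subset_Ici.2 h)).comp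
      (continuous_const.dist continuous_id).measurable
  have hΦC : ∀ r, Φ r ≤ ENNReal.ofReal C :=
    fun r => inv_mul_setLIntegral_le μ _ fun y => ENNReal.ofReal_le_ofReal (hgC y)
  have hswap : ∫⁻ r, Φ r ∂ν = ∫⁻ y, G y * φ y ∂μ :=
    lintegral_mul_setLIntegral_closedBall hA.measurable.inv hφ x
  have hfin : ∫⁻ r, Φ r ∂ν ≠ ∞ :=
    ne_top_of_le_ne_top (by simp [lintegral_const, ENNReal.mul_eq_top])
      (lintegral_mono hΦC)
  have havg : (fun r => avgOp μ r g x) = fun r => (Φ r).toReal :=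
    funext (avgOp_eq_toReal_lintegral hg.aestronglyMeasurable hg₀)
  have hGφ : (fun y => (G y).toReal * g y) = fun y => (G y * φ y).toReal := by
    ext y
    rw [ENNReal.toReal_mul, ENNReal.toReal_ofReal (hg₀ y)]
  have hGφm : Measurable fun y => G y * φ y := hG.mul hφ
  rw [havg, hGφ]
  refine ⟨integrable_toReal_of_lintegral_ne_top hΦ.aemeasurable hfin,
    integrable_toReal_of_lintegral_ne_top hGφm.aemeasurable (hswap ▸ hfin), ?_⟩
  rw [integral_toReal hΦ.aemeasurable (.of_forall fun r => (hΦC r).trans_lt ENNReal.ofReal_lt_top),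
    integral_toReal hGφm.aemeasurable (ae_lt_top hGφm (hswap ▸ hfin)), hswap]

lemma integral_avgOp_eq_integral_heat (hball : ∀ r, μ (closedBall x r) ≠ ∞) {f : X → ℝ}
    (hf : Measurable f) {M : ℝ} (hM : ∀ y, |f y| ≤ M) :
    ∫ r, avgOp μ r f x ∂ν =
      ∫ y, (∫⁻ r in Set.Ici (dist x y), (μ (closedBall x r))⁻¹ ∂ν).toReal * f y ∂μ := by
  have := sigmaFinite_of_measure_closedBall_ne_top x hball
  set g₁ : X → ℝ := fun y => max (f y) 0
  set g₂ : X → ℝ := fun y => max (-f y) 0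
  have hfg : f = g₁ - g₂ := funext fun y => (max_zero_sub_max_neg_zero_eq_self (f y)).symm
  have hg₁ : Measurable g₁ := hf.max measurable_const
  have hg₂ : Measurable g₂ := hf.neg.max measurable_const
  have hg₁₀ : 0 ≤ g₁ := fun y => le_max_right _ _
  have hg₂₀ : 0 ≤ g₂ := fun y => le_max_right _ _
  have hM₀ : 0 ≤ M := (abs_nonneg _).trans (hM x)
  have hg₁M : ∀ y, g₁ y ≤ M := fun y => max_le ((le_abs_self _).trans (hM y)) hM₀
  have hg₂M : ∀ y, g₂ y ≤ M := fun y => max_le ((neg_le_abs _).trans (hM y)) hM₀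
  have hball_int : ∀ g : X → ℝ, Measurable g → 0 ≤ g → (∀ y, g y ≤ M) →
      ∀ r, IntegrableOn g (closedBall x r) μ := fun g hg hg₀ hgM r =>
    Measure.integrableOn_of_bounded (hball r) hg.aestronglyMeasurable
      (.of_forall fun y => (Real.norm_of_nonneg (hg₀ y)).trans_le (hgM y))
  obtain ⟨hν₁, hμ₁, h₁⟩ :=
    integral_avgOp_eq_integral_heat_of_nonneg (μ := μ) (x := x) (ν := ν) hg₁ hg₁₀ hg₁M
  obtain ⟨hν₂, hμ₂, h₂⟩ :=
    integral_avgOp_eq_integral_heat_of_nonneg (μ := μ) (x := x) (ν := ν) hg₂ hg₂₀ hg₂M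
  calc ∫ r, avgOp μ r f x ∂ν = ∫ r, (avgOp μ r g₁ x - avgOp μ r g₂ x) ∂ν := by
        congr with r
        rw [hfg, avgOp_sub (hball_int g₁ hg₁ hg₁₀ hg₁M r) (hball_int g₂ hg₂ hg₂₀ hg₂M r)]
    _ = _ := by
        rw [integral_sub hν₁ hν₂, h₁, h₂, ← integral_sub hμ₁ hμ₂, hfg]
        simp only [Pi.sub_apply, mul_sub]

end HeatKernel

theorem statement_2_general
    {X : Type*} [MetricSpace X]
    [MeasurableSpace X] [BorelSpace X]
    (μ : Measure X)
    (hμfin : ∀ (x : X) (r : ℝ), 0 < r → μ (closedBall x r) < ⊤)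
    (σ : ℝ → ℝ)
    (hσrange : ∀ r : ℝ, 0 ≤ r → σ r ∈ Set.Icc (0:ℝ) 1)
    (ν : ℝ → Measure ℝ)
    (hν : ∀ t : ℝ, 0 < t → ∀ a b : ℝ, 0 ≤ a → a ≤ b →
      ν t (Set.Ico a b) = ENNReal.ofReal (σ b ^ t - σ a ^ t))
    (f : X → ℝ) (hf : Measurable f) (hfb : ∃ M : ℝ, ∀ x : X, |f x| ≤ M)
    (t : ℝ) (ht : 0 < t) (x : X) :
    isoOp μ (ν t) f x = ∫ y, (heatK μ ν t x y).toReal * f y ∂μ := by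
  obtain ⟨M, hM⟩ := hfb
  have : IsFiniteMeasure ((ν t).restrict (Set.Ici 0)) := ⟨by
    rw [Measure.restrict_apply_univ]
    exact (measure_Ici_zero_le_one_of_Ico (F := fun r => σ r ^ t)
      (Real.rpow_nonneg (hσrange 0 le_rfl).1 t)
      (fun r hr => Real.rpow_le_one (hσrange r hr).1 (hσrange r hr).2 ht.le)
      (hν t ht)).trans_lt ENNReal.one_lt_top⟩
  have hball : ∀ r, μ (closedBall x r) ≠ ∞ := fun r =>
    ne_top_of_le_ne_top (hμfin x (max r 1) (lt_max_of_lt_right one_pos)).ne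
      (measure_mono (closedBall_subset_closedBall (le_max_left r 1)))
  have hheat : ∀ y, heatK μ ν t x y =
      ∫⁻ r in Set.Ici (dist x y), (μ (closedBall x r))⁻¹ ∂(ν t).restrict (Set.Ici 0) := by
    intro y
    rw [heatK, Measure.restrict_restrict measurableSet_Ici,
      Set.inter_eq_self_of_subset_left (Set.Ici_subset_Ici.2 dist_nonneg)]
  simp only [isoOp, hheat]
  exact integral_avgOp_eq_integral_heat hball hf hM

theorem statement_2
    {X : Type*} [MetricSpace X] [TopologicalSpace.SeparableSpace X]
    [MeasurableSpace X] [BorelSpace X]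
    (hd : ∀ x y z : X, dist x z ≤ max (dist x y) (dist y z))
    (hcb : ∀ (x : X) (r : ℝ), IsCompact (closedBall x r))
    (μ : Measure X)
    (hμpos : ∀ (x : X) (r : ℝ), 0 < r → 0 < μ (closedBall x r))
    (hμfin : ∀ (x : X) (r : ℝ), 0 < r → μ (closedBall x r) < ⊤)
    (σ : ℝ → ℝ)
    (hσmono : StrictMonoOn σ (Set.Ici 0))
    (hσrange : ∀ r : ℝ, 0 ≤ r → σ r ∈ Set.Icc (0:ℝ) 1)
    (hσlc : ∀ r : ℝ, 0 < r → ContinuousWithinAt σ (Set.Iic r) r)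
    (hσzero : Tendsto σ (nhdsWithin 0 (Set.Ioi 0)) (nhds 0))
    (hσtop : Tendsto σ atTop (nhds 1))
    (ν : ℝ → Measure ℝ)
    (hν : ∀ t : ℝ, 0 < t → ∀ a b : ℝ, 0 ≤ a → a ≤ b →
      ν t (Set.Ico a b) = ENNReal.ofReal (σ b ^ t - σ a ^ t))
    (hνneg : ∀ t : ℝ, 0 < t → ν t (Set.Iio 0) = 0)
    (f : X → ℝ) (hf : Measurable f) (hfb : ∃ M : ℝ, ∀ x : X, |f x| ≤ M)
    (t : ℝ) (ht : 0 < t) (x : X) :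
    isoOp μ (ν t) f x = ∫ y, (heatK μ ν t x y).toReal * f y ∂μ :=
  statement_2_general μ hμfin σ hσrange ν hν f hf hfb t ht x
end

section
/- For each fixed t > 0 the function ρ_t defined by ρ_t(x,y) = 1/p(t,x,y) for x ≠ y and ρ_t(x,x) = 0 is an ultra-metric on X: it is finite and non-negative, symmetric, vanishes exactly on the diagonal, and satisfies ρ_t(x,y) ≤ max{ρ_t(x,z), ρ_t(z,y)} for all x,y,z ∈ X. -/
open MeasureTheory Metric Filter
open scoped ENNReal Classical

/- On an ultrametric space every point of a closed ball is a centre of it, so the integrands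
defining `p(t,x,y)` and `p(t,y,x)` agree on `[d(x,y),∞)`; `p(t,x,·)` is antitone in the distance
from `x`, hence `1/p(t,x,·)` is monotone in it and inherits the ultrametric inequality from `d`.
Finiteness and positivity of `p(t,x,y)` off the diagonal come from `μ(B_r(x)) ∈ (0,∞)` together
with `dσ^t([d,∞)) ≤ 1` and `dσ^t([d,d+1)) > 0`. -/

section StieltjesMeasure

variable {m : Measure ℝ} {F : ℝ → ℝ}
  (hm : ∀ a b : ℝ, 0 ≤ a → a ≤ b → m (Set.Ico a b) = ENNReal.ofReal (F b - F a))
include hm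

lemma measure_Ici_le_one_of_Ico (hF : ∀ r : ℝ, 0 ≤ r → F r ∈ Set.Icc (0:ℝ) 1)
    {a : ℝ} (ha : 0 ≤ a) : m (Set.Ici a) ≤ 1 := by
  refine le_of_tendsto (tendsto_measure_Ico_atTop m a) ?_
  filter_upwards [eventually_ge_atTop a] with b hab
  rw [hm a b ha hab, ← ENNReal.ofReal_one]
  exact ENNReal.ofReal_le_ofReal (by linarith [(hF b (ha.trans hab)).2, (hF a ha).1])

lemma measure_Ico_pos_of_Ico (hF : StrictMonoOn F (Set.Ici 0))
    {a b : ℝ} (ha : 0 ≤ a) (hab : a < b) : 0 < m (Set.Ico a b) := by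
  rw [hm a b ha hab.le, ENNReal.ofReal_pos, sub_pos]
  exact hF (Set.mem_Ici.mpr ha) (Set.mem_Ici.mpr (ha.trans hab.le)) hab

end StieltjesMeasure

section HeatKernel

variable {X : Type*} [MetricSpace X] [MeasurableSpace X]
  (μ : Measure X) (ν : ℝ → Measure ℝ) (t : ℝ)

lemma heatK_comm [IsUltrametricDist X] (x y : X) : heatK μ ν t x y = heatK μ ν t y x := by
  rw [heatK, heatK, dist_comm y x]
  refine setLIntegral_congr_fun measurableSet_Ici fun r hr => ?_
  rw [IsUltrametricDist.closedBall_eq_of_mem (mem_closedBall'.mpr (Set.mem_Ici.mp hr))]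

lemma heatK_antitone {x y z : X} (h : dist x y ≤ dist x z) :
    heatK μ ν t x z ≤ heatK μ ν t x y :=
  lintegral_mono_set (Set.Ici_subset_Ici.mpr h)

lemma heatK_le (x y : X) :
    heatK μ ν t x y ≤ (μ (closedBall x (dist x y)))⁻¹ * ν t (Set.Ici (dist x y)) := by
  rw [← setLIntegral_const]
  refine setLIntegral_mono' measurableSet_Ici fun r hr => ?_
  exact ENNReal.inv_le_inv' (measure_mono (closedBall_subset_closedBall hr))

lemma le_heatK (x y : X) (R : ℝ) :
    (μ (closedBall x R))⁻¹ * ν t (Set.Ico (dist x y) R) ≤ heatK μ ν t x y :=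
  calc (μ (closedBall x R))⁻¹ * ν t (Set.Ico (dist x y) R)
      = ∫⁻ _ in Set.Ico (dist x y) R, (μ (closedBall x R))⁻¹ ∂(ν t) :=
        (setLIntegral_const _ _).symm
    _ ≤ ∫⁻ r in Set.Ico (dist x y) R, (μ (closedBall x r))⁻¹ ∂(ν t) :=
        setLIntegral_mono' measurableSet_Ico fun _ hr =>
          ENNReal.inv_le_inv' (measure_mono (closedBall_subset_closedBall hr.2.le))
    _ ≤ heatK μ ν t x y := lintegral_mono_set Set.Ico_subset_Ici_self

variable {μ ν t} {σ : ℝ → ℝ} (ht : 0 < t)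
  (hν : ∀ t : ℝ, 0 < t → ∀ a b : ℝ, 0 ≤ a → a ≤ b →
    ν t (Set.Ico a b) = ENNReal.ofReal (σ b ^ t - σ a ^ t))
include ht hν

lemma heatK_ne_top (hμpos : ∀ (x : X) (r : ℝ), 0 < r → 0 < μ (closedBall x r))
    (hσrange : ∀ r : ℝ, 0 ≤ r → σ r ∈ Set.Icc (0:ℝ) 1) {x y : X} (hxy : x ≠ y) :
    heatK μ ν t x y ≠ ⊤ := by
  have hd : 0 < dist x y := dist_pos.mpr hxy
  have hν_le : ν t (Set.Ici (dist x y)) ≤ 1 :=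
    measure_Ici_le_one_of_Ico (hν t ht) (fun r hr => ⟨Real.rpow_nonneg (hσrange r hr).1 t,
      Real.rpow_le_one (hσrange r hr).1 (hσrange r hr).2 ht.le⟩) hd.le
  refine ne_top_of_le_ne_top (ENNReal.mul_ne_top ?_ ?_) (heatK_le μ ν t x y)
  · exact ENNReal.inv_ne_top.mpr (hμpos x _ hd).ne'
  · exact ne_top_of_le_ne_top ENNReal.one_ne_top hν_le

lemma heatK_ne_zero (hμfin : ∀ (x : X) (r : ℝ), 0 < r → μ (closedBall x r) < ⊤)
    (hσmono : StrictMonoOn σ (Set.Ici 0)) (hσrange : ∀ r : ℝ, 0 ≤ r → σ r ∈ Set.Icc (0:ℝ) 1)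
    {x y : X} (hxy : x ≠ y) : heatK μ ν t x y ≠ 0 := by
  have hd : 0 < dist x y := dist_pos.mpr hxy
  have hσt : StrictMonoOn (fun r => σ r ^ t) (Set.Ici 0) := fun a ha b hb hab =>
    Real.rpow_lt_rpow (hσrange a ha).1 (hσmono ha hb hab) ht
  refine (lt_of_lt_of_le (ENNReal.mul_pos ?_ ?_) (le_heatK μ ν t x y (dist x y + 1))).ne'
  · exact ENNReal.inv_ne_zero.mpr (hμfin x _ (by linarith)).ne
  · exact (measure_Ico_pos_of_Ico (hν t ht) hσt hd.le (by linarith)).ne'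

end HeatKernel

noncomputable def kernelDist {X : Type*} (p : X → X → ℝ≥0∞) (x y : X) : ℝ :=
  if x = y then 0 else (p x y).toReal⁻¹

namespace kernelDist

variable {X : Type*} {p : X → X → ℝ≥0∞}

lemma nonneg (x y : X) : 0 ≤ kernelDist p x y := by
  unfold kernelDist; split_ifs <;> positivity

lemma comm (hp : ∀ x y, p x y = p y x) (x y : X) : kernelDist p x y = kernelDist p y x := by
  unfold kernelDist
  simp only [eq_comm (a := x), hp x y]

lemma self (x : X) : kernelDist p x x = 0 := if_pos rfl

variable (hp0 : ∀ x y, x ≠ y → p x y ≠ 0) (hptop : ∀ x y, x ≠ y → p x y ≠ ⊤)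
include hp0 hptop

lemma pos {x y : X} (hxy : x ≠ y) : 0 < kernelDist p x y := by
  rw [kernelDist, if_neg hxy]
  exact inv_pos.mpr (ENNReal.toReal_pos (hp0 x y hxy) (hptop x y hxy))

lemma eq_zero_iff {x y : X} : kernelDist p x y = 0 ↔ x = y :=
  ⟨fun h => by_contra fun hxy => (pos hp0 hptop hxy).ne' h, fun h => h ▸ self x⟩

lemma mono_dist [MetricSpace X]
    (hp : ∀ x y z : X, dist x y ≤ dist x z → p x z ≤ p x y)
    {x y z : X} (h : dist x y ≤ dist x z) : kernelDist p x y ≤ kernelDist p x z := by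
  by_cases hxy : x = y
  · rw [hxy, self]; exact nonneg y z
  have hxz : x ≠ z := by
    rintro rfl; exact hxy (dist_le_zero.mp (dist_self x ▸ h))
  rw [kernelDist, kernelDist, if_neg hxy, if_neg hxz]
  refine inv_anti₀ (ENNReal.toReal_pos (hp0 x z hxz) (hptop x z hxz)) ?_
  exact (ENNReal.toReal_le_toReal (hptop x z hxz) (hptop x y hxy)).mpr (hp x y z h)

lemma le_max [MetricSpace X] [IsUltrametricDist X] (hp : ∀ x y, p x y = p y x)
    (hpd : ∀ x y z : X, dist x y ≤ dist x z → p x z ≤ p x y) (x y z : X) :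
    kernelDist p x y ≤ max (kernelDist p x z) (kernelDist p z y) := by
  rcases le_max_iff.mp (IsUltrametricDist.dist_triangle_max x z y) with h | h
  · exact le_max_of_le_left (mono_dist hp0 hptop hpd h)
  · rw [comm hp x y, comm hp z y]
    exact le_max_of_le_right (mono_dist hp0 hptop hpd (by rwa [dist_comm y x, dist_comm y z]))

end kernelDist

theorem statement_4_general
    {X : Type*} [MetricSpace X]
    [MeasurableSpace X]
    (hd : ∀ x y z : X, dist x z ≤ max (dist x y) (dist y z))
    (μ : Measure X)
    (hμpos : ∀ (x : X) (r : ℝ), 0 < r → 0 < μ (closedBall x r))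
    (hμfin : ∀ (x : X) (r : ℝ), 0 < r → μ (closedBall x r) < ⊤)
    (σ : ℝ → ℝ)
    (hσmono : StrictMonoOn σ (Set.Ici 0))
    (hσrange : ∀ r : ℝ, 0 ≤ r → σ r ∈ Set.Icc (0:ℝ) 1)
    (ν : ℝ → Measure ℝ)
    (hν : ∀ t : ℝ, 0 < t → ∀ a b : ℝ, 0 ≤ a → a ≤ b →
      ν t (Set.Ico a b) = ENNReal.ofReal (σ b ^ t - σ a ^ t))
    (t : ℝ) (ht : 0 < t) (ρ : X → X → ℝ)
    (hρ : ∀ x y : X, ρ x y = if x = y then 0 else ((heatK μ ν t x y).toReal)⁻¹) :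
    (∀ x y : X, 0 ≤ ρ x y) ∧
    (∀ x y : X, ρ x y = ρ y x) ∧
    (∀ x y : X, ρ x y = 0 ↔ x = y) ∧
    (∀ x y z : X, ρ x y ≤ max (ρ x z) (ρ z y)) := by
  have : IsUltrametricDist X := ⟨hd⟩
  obtain rfl : ρ = kernelDist (heatK μ ν t) := funext₂ hρ
  have hsymm := heatK_comm μ ν t
  have hanti : ∀ x y z : X, dist x y ≤ dist x z → heatK μ ν t x z ≤ heatK μ ν t x y :=
    fun _ _ _ => heatK_antitone μ ν t
  have h0 : ∀ x y : X, x ≠ y → heatK μ ν t x y ≠ 0 :=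
    fun _ _ => heatK_ne_zero ht hν hμfin hσmono hσrange
  have htop : ∀ x y : X, x ≠ y → heatK μ ν t x y ≠ ⊤ :=
    fun _ _ => heatK_ne_top ht hν hμpos hσrange
  exact ⟨kernelDist.nonneg, kernelDist.comm hsymm, fun _ _ => kernelDist.eq_zero_iff h0 htop,
    kernelDist.le_max h0 htop hsymm hanti⟩

theorem statement_4
    {X : Type*} [MetricSpace X] [TopologicalSpace.SeparableSpace X]
    [MeasurableSpace X] [BorelSpace X]
    (hd : ∀ x y z : X, dist x z ≤ max (dist x y) (dist y z))
    (hcb : ∀ (x : X) (r : ℝ), IsCompact (closedBall x r))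
    (μ : Measure X)
    (hμpos : ∀ (x : X) (r : ℝ), 0 < r → 0 < μ (closedBall x r))
    (hμfin : ∀ (x : X) (r : ℝ), 0 < r → μ (closedBall x r) < ⊤)
    (σ : ℝ → ℝ)
    (hσmono : StrictMonoOn σ (Set.Ici 0))
    (hσrange : ∀ r : ℝ, 0 ≤ r → σ r ∈ Set.Icc (0:ℝ) 1)
    (hσlc : ∀ r : ℝ, 0 < r → ContinuousWithinAt σ (Set.Iic r) r)
    (hσzero : Tendsto σ (nhdsWithin 0 (Set.Ioi 0)) (nhds 0))
    (hσtop : Tendsto σ atTop (nhds 1))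
    (ν : ℝ → Measure ℝ)
    (hν : ∀ t : ℝ, 0 < t → ∀ a b : ℝ, 0 ≤ a → a ≤ b →
      ν t (Set.Ico a b) = ENNReal.ofReal (σ b ^ t - σ a ^ t))
    (hνneg : ∀ t : ℝ, 0 < t → ν t (Set.Iio 0) = 0)
    (t : ℝ) (ht : 0 < t) (ρ : X → X → ℝ)
    (hρ : ∀ x y : X, ρ x y = if x = y then 0 else ((heatK μ ν t x y).toReal)⁻¹) :
    (∀ x y : X, 0 ≤ ρ x y) ∧
    (∀ x y : X, ρ x y = ρ y x) ∧
    (∀ x y : X, ρ x y = 0 ↔ x = y) ∧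
    (∀ x y z : X, ρ x y ≤ max (ρ x z) (ρ z y)) :=
  statement_4_general hd μ hμpos hμfin σ hσmono hσrange ν hν t ht ρ hρ
end

section
/- For every t > 0 and all x, y ∈ X (with the convention t/d_*(x,y) = ∞ and 1/d_*(x,y) = ∞ when x = y), the heat kernel satisfies p(t,x,y) = ∫_0^{t/d_*(x,y)} N(x, s/t) e^{−s} ds and p(t,x,y) = t ∫_0^{1/d_*(x,y)} N(x,τ) e^{−τt} dτ. -/
open MeasureTheory Metric Filter
open scoped ENNReal Classical

/-!
Let `q τ = sup {r ≥ 0 | σ r ≤ e^{-τ}}`. Left continuity of `σ` gives `r ≤ q τ ↔ σ r ≤ e^{-τ}`,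
i.e. `r ≤ q τ ↔ τ ≤ -log σ r` for `r > 0`. Hence, if `τ` has the exponential law of rate `t`, then
`P(q τ < r) = P(τ > -log σ r) = σ r ^ t`: the Lebesgue–Stieltjes measure `dσ^t` is the law of `q`.
Pulling the heat kernel back along `q` gives
`p(t,x,y) = t ∫_{d(x,y) ≤ q τ} μ(B_{q τ}(x))⁻¹ e^{-τt} dτ`, where `B_{q τ}(x) = B*_{1/τ}(x)` and
`d(x,y) ≤ q τ ↔ τ ≤ 1/d_*(x,y)`. The first formula follows by substituting `s = tτ`.
-/

open Set Real

structure IsDistanceDistribution (σ : ℝ → ℝ) : Prop where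
  strictMonoOn : StrictMonoOn σ (Ici 0)
  mem_Icc : ∀ r : ℝ, 0 ≤ r → σ r ∈ Icc (0:ℝ) 1
  continuousWithinAt_Iic : ∀ r : ℝ, 0 < r → ContinuousWithinAt σ (Iic r) r
  tendsto_nhdsGT_zero : Tendsto σ (nhdsWithin 0 (Ioi 0)) (nhds 0)
  tendsto_atTop : Tendsto σ atTop (nhds 1)

namespace IsDistanceDistribution

variable {σ : ℝ → ℝ}

theorem map_zero (hσ : IsDistanceDistribution σ) : σ 0 = 0 := by
  have h : ∀ᶠ r in nhdsWithin (0:ℝ) (Ioi 0), σ 0 ≤ σ r := by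
    filter_upwards [self_mem_nhdsWithin] with r (hr : 0 < r)
    exact (hσ.strictMonoOn self_mem_Ici hr.le hr).le
  exact le_antisymm (ge_of_tendsto hσ.tendsto_nhdsGT_zero h) (hσ.mem_Icc 0 le_rfl).1

theorem pos (hσ : IsDistanceDistribution σ) {r : ℝ} (hr : 0 < r) : 0 < σ r :=
  hσ.map_zero ▸ hσ.strictMonoOn self_mem_Ici hr.le hr

theorem lt_one (hσ : IsDistanceDistribution σ) {r : ℝ} (hr : 0 ≤ r) : σ r < 1 :=
  (hσ.strictMonoOn hr (by simp only [mem_Ici]; linarith) (lt_add_one r)).trans_le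
    (hσ.mem_Icc (r + 1) (by linarith)).2

theorem neg_log_pos (hσ : IsDistanceDistribution σ) {r : ℝ} (hr : 0 < r) :
    0 < -Real.log (σ r) :=
  neg_pos.mpr (Real.log_neg (hσ.pos hr) (hσ.lt_one hr.le))

end IsDistanceDistribution

/-- A generalized inverse of `r ↦ -log σ r`. For `τ ≤ 0` the defining set is unbounded and
`sSup` returns the junk value `0`. -/
noncomputable def distQuantile (σ : ℝ → ℝ) (τ : ℝ) : ℝ :=
  sSup {r : ℝ | 0 ≤ r ∧ σ r ≤ exp (-τ)}

section Quantile

variable {σ : ℝ → ℝ}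

theorem distQuantile_nonneg (τ : ℝ) : 0 ≤ distQuantile σ τ :=
  Real.sSup_nonneg fun _ hr => hr.1

theorem distQuantile_of_nonpos (hσ : IsDistanceDistribution σ) {τ : ℝ} (hτ : τ ≤ 0) :
    distQuantile σ τ = 0 := by
  have hsub : Ici (0:ℝ) ⊆ {r : ℝ | 0 ≤ r ∧ σ r ≤ exp (-τ)} := fun r hr =>
    ⟨hr, (hσ.mem_Icc r hr).2.trans (one_le_exp (neg_nonneg.mpr hτ))⟩
  exact Real.sSup_of_not_bddAbove fun h => not_bddAbove_Ici 0 (h.mono hsub)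

theorem bddAbove_distQuantile_set (hσ : IsDistanceDistribution σ) {τ : ℝ} (hτ : 0 < τ) :
    BddAbove {r : ℝ | 0 ≤ r ∧ σ r ≤ exp (-τ)} := by
  have hlt : exp (-τ) < 1 := Real.exp_lt_one_iff.mpr (neg_neg_of_pos hτ)
  obtain ⟨M, hM0, hM⟩ := ((eventually_ge_atTop 0).and
    (hσ.tendsto_atTop.eventually (eventually_gt_nhds hlt))).exists
  refine ⟨M, fun r hr => le_of_not_gt fun hMr => ?_⟩
  exact (hr.2.trans_lt hM).not_ge (hσ.strictMonoOn hM0 hr.1 hMr).le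

/-- Left continuity of `σ` makes the supremum attained. -/
theorem sigma_distQuantile_le (hσ : IsDistanceDistribution σ) (τ : ℝ) :
    σ (distQuantile σ τ) ≤ exp (-τ) := by
  rcases (distQuantile_nonneg (σ := σ) τ).eq_or_lt with hq | hq
  · rw [← hq, hσ.map_zero]
    exact (exp_pos _).le
  refine le_of_tendsto ((hσ.continuousWithinAt_Iic _ hq).tendsto.mono_left
    (nhdsWithin_mono _ Iio_subset_Iic_self)) ?_
  have hne : {r : ℝ | 0 ≤ r ∧ σ r ≤ exp (-τ)}.Nonempty :=
    ⟨0, le_rfl, by rw [hσ.map_zero]; exact (exp_pos _).le⟩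
  filter_upwards [self_mem_nhdsWithin,
    eventually_nhdsWithin_of_eventually_nhds (eventually_gt_nhds hq)] with r hrq hr
  obtain ⟨r', hr', hrr'⟩ := exists_lt_of_lt_csSup hne hrq
  exact (hσ.strictMonoOn hr.le hr'.1 hrr').le.trans hr'.2

theorem le_distQuantile_iff (hσ : IsDistanceDistribution σ) {τ a : ℝ} (hτ : 0 < τ)
    (ha : 0 ≤ a) : a ≤ distQuantile σ τ ↔ σ a ≤ exp (-τ) :=
  ⟨fun h => (hσ.strictMonoOn.monotoneOn ha (ha.trans h) h).trans (sigma_distQuantile_le hσ τ),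
    fun h => le_csSup (bddAbove_distQuantile_set hσ hτ) ⟨ha, h⟩⟩

theorem le_distQuantile_iff_le_neg_log (hσ : IsDistanceDistribution σ) {τ a : ℝ} (hτ : 0 < τ)
    (ha : 0 < a) : a ≤ distQuantile σ τ ↔ τ ≤ -Real.log (σ a) := by
  rw [le_distQuantile_iff hσ hτ ha.le, ← Real.log_le_iff_le_exp (hσ.pos ha), le_neg]

theorem distQuantile_preimage_Ici (hσ : IsDistanceDistribution σ) {a : ℝ} (ha : 0 < a) :
    distQuantile σ ⁻¹' Ici a = Ioc 0 (-Real.log (σ a)) := by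
  ext τ
  rcases le_or_gt τ 0 with hτ | hτ
  · simp only [mem_preimage, mem_Ici, distQuantile_of_nonpos hσ hτ, mem_Ioc, not_lt.mpr hτ,
      false_and, iff_false, not_le, ha]
  · simp only [mem_preimage, mem_Ici, mem_Ioc, hτ, true_and,
      le_distQuantile_iff_le_neg_log hσ hτ ha]

theorem measurable_distQuantile (hσ : IsDistanceDistribution σ) :
    Measurable (distQuantile σ) := by
  refine measurable_of_Ici fun a => ?_
  rcases le_or_gt a 0 with ha | ha
  · convert MeasurableSet.univ
    exact eq_univ_of_forall fun τ => ha.trans (distQuantile_nonneg τ)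
  · rw [distQuantile_preimage_Ici hσ ha]
    exact measurableSet_Ioc

end Quantile

noncomputable def expLaw (t : ℝ) : Measure ℝ :=
  ENNReal.ofReal t • (volume.restrict (Ioi 0)).withDensity fun τ => ENNReal.ofReal (exp (-(τ * t)))

section ExpLaw

variable {t : ℝ}

theorem setLIntegral_map_expLaw {g : ℝ → ℝ} (hg : Measurable g) {F : ℝ → ℝ≥0∞}
    (hF : Measurable F) {A : Set ℝ} (hA : MeasurableSet A) :
    ∫⁻ r in A, F r ∂(expLaw t).map g =
      ENNReal.ofReal t * ∫⁻ τ in g ⁻¹' A ∩ Ioi 0, F (g τ) * ENNReal.ofReal (exp (-(τ * t))) := by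
  have hexp : Measurable fun τ : ℝ => ENNReal.ofReal (exp (-(τ * t))) := by fun_prop
  have hFg : Measurable fun τ => F (g τ) := hF.comp hg
  rw [setLIntegral_map hA hF hg, expLaw, Measure.restrict_smul, lintegral_smul_measure,
    restrict_withDensity (hg hA), Measure.restrict_restrict (hg hA), smul_eq_mul,
    lintegral_withDensity_eq_lintegral_mul _ hexp hFg]
  simp only [Pi.mul_apply, mul_comm]

theorem lintegral_exp_Ioi (ht : 0 < t) (u : ℝ) :
    ENNReal.ofReal t * ∫⁻ τ in Ioi u, ENNReal.ofReal (exp (-(τ * t))) =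
      ENNReal.ofReal (exp (-(u * t))) := by
  have hfun : (fun τ => exp (-(τ * t))) = fun τ => exp (-t * τ) := by
    ext τ
    ring_nf
  rw [← ofReal_integral_eq_lintegral_ofReal (hfun ▸ exp_neg_integrableOn_Ioi u ht)
      (ae_of_all _ fun _ => (exp_pos _).le), ← ENNReal.ofReal_mul ht.le, hfun,
    integral_exp_mul_Ioi (neg_neg_of_pos ht)]
  congr 1
  field_simp

theorem isProbabilityMeasure_expLaw (ht : 0 < t) : IsProbabilityMeasure (expLaw t) := by
  constructor
  rw [expLaw, Measure.smul_apply, withDensity_apply _ MeasurableSet.univ, Measure.restrict_univ,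
    smul_eq_mul, lintegral_exp_Ioi ht, zero_mul, neg_zero, exp_zero, ENNReal.ofReal_one]

end ExpLaw

theorem MeasureTheory.Measure.ext_of_Ico_of_Iio_zero (m m' : Measure ℝ) [IsFiniteMeasure m]
    (hm : m (Iio 0) = 0) (hm' : m' (Iio 0) = 0)
    (h : ∀ a b, 0 ≤ a → a ≤ b → m (Ico a b) = m' (Ico a b)) : m = m' := by
  refine Measure.ext_of_Ico' m m' (fun _ _ _ => measure_ne_top m _) fun a b _ => ?_
  have hcut : ∀ m : Measure ℝ, m (Iio 0) = 0 → m (Ico a b) = m (Ico (max a 0) b) := by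
    intro m hm
    rw [← measure_inter_conull (s := Ico a b) (t := Ici 0) (by rwa [compl_Ici])]
    congr 1
    ext r
    simp only [mem_inter_iff, mem_Ico, mem_Ici, max_le_iff]
    tauto
  rw [hcut m hm, hcut m' hm']
  rcases le_total (max a 0) b with hab | hba
  · exact h _ _ (le_max_right a 0) hab
  · simp only [Ico_eq_empty_of_le hba, measure_empty]

section QuantileLaw

variable {σ : ℝ → ℝ} {t : ℝ}

theorem map_distQuantile_Iio (hσ : IsDistanceDistribution σ) (ht : 0 < t) {a : ℝ}
    (ha : 0 ≤ a) : (expLaw t).map (distQuantile σ) (Iio a) = ENNReal.ofReal (σ a ^ t) := by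
  rw [← setLIntegral_one, setLIntegral_map_expLaw (measurable_distQuantile hσ) measurable_const
    measurableSet_Iio]
  simp only [one_mul]
  rcases ha.eq_or_lt with rfl | ha
  · have hempty : distQuantile σ ⁻¹' Iio 0 ∩ Ioi 0 = ∅ :=
      eq_empty_of_forall_notMem fun τ hτ => (distQuantile_nonneg τ).not_gt hτ.1
    rw [hempty, Measure.restrict_empty, lintegral_zero_measure, mul_zero, hσ.map_zero,
      zero_rpow ht.ne', ENNReal.ofReal_zero]
  · have hpre : distQuantile σ ⁻¹' Iio a ∩ Ioi 0 = Ioi (-Real.log (σ a)) := by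
      rw [← compl_Ici, preimage_compl, distQuantile_preimage_Ici hσ ha, compl_Ioc,
        union_inter_distrib_right, Iic_inter_Ioi, Ioi_inter_Ioi, Ioc_self, empty_union,
        max_eq_left (hσ.neg_log_pos ha).le]
    rw [hpre, lintegral_exp_Ioi ht, rpow_def_of_pos (hσ.pos ha), neg_mul, neg_neg]

theorem map_distQuantile_Ico (hσ : IsDistanceDistribution σ) (ht : 0 < t) {a b : ℝ}
    (ha : 0 ≤ a) (hab : a ≤ b) :
    (expLaw t).map (distQuantile σ) (Ico a b) = ENNReal.ofReal (σ b ^ t - σ a ^ t) := by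
  have hdiff : Iio b \ Iio a = Ico a b := by
    ext r
    simp only [Set.mem_sdiff, mem_Iio, mem_Ico, not_lt]
    tauto
  rw [← hdiff, measure_sdiff (Iio_subset_Iio hab) measurableSet_Iio.nullMeasurableSet
      (by rw [map_distQuantile_Iio hσ ht ha]; exact ENNReal.ofReal_ne_top),
    map_distQuantile_Iio hσ ht ha, map_distQuantile_Iio hσ ht (ha.trans hab),
    ENNReal.ofReal_sub _ (rpow_nonneg (hσ.mem_Icc a ha).1 t)]

theorem eq_map_distQuantile_expLaw (hσ : IsDistanceDistribution σ) (ht : 0 < t) {ν : Measure ℝ}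
    (hν : ∀ a b : ℝ, 0 ≤ a → a ≤ b → ν (Ico a b) = ENNReal.ofReal (σ b ^ t - σ a ^ t))
    (hν0 : ν (Iio 0) = 0) : ν = (expLaw t).map (distQuantile σ) := by
  have := isProbabilityMeasure_expLaw ht
  refine (Measure.ext_of_Ico_of_Iio_zero _ ν ?_ hν0 fun a b ha hab => ?_).symm
  · rw [map_distQuantile_Iio hσ ht le_rfl, hσ.map_zero, zero_rpow ht.ne', ENNReal.ofReal_zero]
  · rw [map_distQuantile_Ico hσ ht ha hab, hν a b ha hab]

end QuantileLaw

theorem setLIntegral_comp_div {t : ℝ} (ht : 0 < t) (g : ℝ → ℝ≥0∞) (A : Set ℝ) :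
    ∫⁻ s in (fun s => s / t) ⁻¹' A, g (s / t) = ENNReal.ofReal t * ∫⁻ τ in A, g τ := by
  have hinv : t⁻¹ ≠ 0 := inv_ne_zero ht.ne'
  have hmp : MeasurePreserving (fun s => s * t⁻¹) volume (ENNReal.ofReal t • volume) :=
    ⟨measurable_mul_const _, by rw [Real.map_volume_mul_right hinv, inv_inv, abs_of_pos ht]⟩
  simp only [div_eq_mul_inv]
  rw [hmp.setLIntegral_comp_preimage_emb (measurableEmbedding_mulRight₀ hinv),
    Measure.restrict_smul, lintegral_smul_measure, smul_eq_mul]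

section StarBall

variable {X : Type*} [MetricSpace X] {σ : ℝ → ℝ}

theorem one_div_dstar {x y : X} (hxy : x ≠ y) :
    1 / dstar σ x y = -Real.log (σ (dist x y)) := by
  rw [dstar, if_neg hxy, one_div_one_div, one_div, Real.log_inv]

theorem closedBall_distQuantile (hσ : IsDistanceDistribution σ) {τ : ℝ} (hτ : 0 < τ) (x : X) :
    closedBall x (distQuantile σ τ) = starBall σ x (1 / τ) := by
  ext z
  simp only [mem_closedBall, starBall, mem_ofPred_eq]
  rcases eq_or_ne x z with rfl | hxz
  · rw [dist_self, dstar, if_pos rfl]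
    exact iff_of_true (distQuantile_nonneg τ) (one_div_pos.mpr hτ).le
  · have hd : 0 < dist x z := dist_pos.mpr hxz
    have hstar : 0 < dstar σ x z :=
      one_div_pos.mp ((one_div_dstar hxz).symm ▸ hσ.neg_log_pos hd)
    rw [dist_comm, le_distQuantile_iff_le_neg_log hσ hτ hd, ← one_div_dstar hxz,
      le_one_div hτ hstar]

theorem distQuantile_preimage_Ici_dist_self_inter_Ioi (x : X) :
    distQuantile σ ⁻¹' Ici (dist x x) ∩ Ioi 0 = Ioi 0 := by
  rw [dist_self, inter_eq_right]
  exact fun τ _ => distQuantile_nonneg τ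

theorem distQuantile_preimage_Ici_dist_inter_Ioi (hσ : IsDistanceDistribution σ) {x y : X}
    (hxy : x ≠ y) : distQuantile σ ⁻¹' Ici (dist x y) ∩ Ioi 0 = Ioc 0 (1 / dstar σ x y) := by
  rw [distQuantile_preimage_Ici hσ (dist_pos.mpr hxy), ← one_div_dstar hxy]
  exact inter_eq_left.mpr Ioc_subset_Ioi_self

theorem heatK_eq_setLIntegral_specN [MeasurableSpace X] (hσ : IsDistanceDistribution σ)
    {ν : ℝ → Measure ℝ} {t : ℝ} (ht : 0 < t)
    (hν : ∀ a b : ℝ, 0 ≤ a → a ≤ b → ν t (Ico a b) = ENNReal.ofReal (σ b ^ t - σ a ^ t))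
    (hν0 : ν t (Iio 0) = 0) (μ : Measure X) (x y : X) :
    heatK μ ν t x y = ENNReal.ofReal t * ∫⁻ τ in distQuantile σ ⁻¹' Ici (dist x y) ∩ Ioi 0,
      specN μ σ x τ * ENNReal.ofReal (exp (-(τ * t))) := by
  have hF : Measurable fun r => (μ (closedBall x r))⁻¹ :=
    (Monotone.measurable fun _ _ h => measure_mono (closedBall_subset_closedBall h)).inv
  rw [heatK, eq_map_distQuantile_expLaw hσ ht hν hν0,
    setLIntegral_map_expLaw (measurable_distQuantile hσ) hF measurableSet_Ici]
  congr 1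
  refine setLIntegral_congr_fun
    ((measurable_distQuantile hσ measurableSet_Ici).inter measurableSet_Ioi) fun τ hτ => ?_
  rw [specN, closedBall_distQuantile hσ hτ.2]

end StarBall

theorem statement_6_general
    {X : Type*} [MetricSpace X]
    [MeasurableSpace X]
    (μ : Measure X)
    (σ : ℝ → ℝ)
    (hσmono : StrictMonoOn σ (Set.Ici 0))
    (hσrange : ∀ r : ℝ, 0 ≤ r → σ r ∈ Set.Icc (0:ℝ) 1)
    (hσlc : ∀ r : ℝ, 0 < r → ContinuousWithinAt σ (Set.Iic r) r)
    (hσzero : Tendsto σ (nhdsWithin 0 (Set.Ioi 0)) (nhds 0))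
    (hσtop : Tendsto σ atTop (nhds 1))
    (ν : ℝ → Measure ℝ)
    (hν : ∀ t : ℝ, 0 < t → ∀ a b : ℝ, 0 ≤ a → a ≤ b →
      ν t (Set.Ico a b) = ENNReal.ofReal (σ b ^ t - σ a ^ t))
    (hνneg : ∀ t : ℝ, 0 < t → ν t (Set.Iio 0) = 0)
    (t : ℝ) (ht : 0 < t) (x y : X) :
    (x = y → heatK μ ν t x y =
      ∫⁻ s in Set.Ioi (0:ℝ), specN μ σ x (s / t) * ENNReal.ofReal (Real.exp (-s))) ∧
    (x ≠ y → heatK μ ν t x y =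
      ∫⁻ s in Set.Ioc (0:ℝ) (t / dstar σ x y),
        specN μ σ x (s / t) * ENNReal.ofReal (Real.exp (-s))) ∧
    (x = y → heatK μ ν t x y =
      ENNReal.ofReal t *
        ∫⁻ τ in Set.Ioi (0:ℝ), specN μ σ x τ * ENNReal.ofReal (Real.exp (-(τ * t)))) ∧
    (x ≠ y → heatK μ ν t x y =
      ENNReal.ofReal t *
        ∫⁻ τ in Set.Ioc (0:ℝ) (1 / dstar σ x y),
          specN μ σ x τ * ENNReal.ofReal (Real.exp (-(τ * t)))) := by
  have hσ : IsDistanceDistribution σ := ⟨hσmono, hσrange, hσlc, hσzero, hσtop⟩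
  have hheat := heatK_eq_setLIntegral_specN hσ ht (hν t ht) (hνneg t ht) μ x y
  have hscale : ∀ A : Set ℝ,
      ENNReal.ofReal t * ∫⁻ τ in A, specN μ σ x τ * ENNReal.ofReal (exp (-(τ * t))) =
        ∫⁻ s in (fun s => s / t) ⁻¹' A, specN μ σ x (s / t) * ENNReal.ofReal (exp (-s)) := by
    intro A
    rw [← setLIntegral_comp_div ht]
    simp only [div_mul_cancel₀ _ ht.ne']
  have hIoi : (fun s => s / t) ⁻¹' Ioi 0 = Ioi 0 := ext fun s => div_pos_iff_of_pos_right ht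
  have hIoc : ∀ c : ℝ, (fun s => s / t) ⁻¹' Ioc 0 (1 / c) = Ioc 0 (t / c) := fun c => by
    ext s
    simp only [mem_preimage, mem_Ioc, div_pos_iff_of_pos_right ht, div_le_iff₀ ht,
      one_div_mul_eq_div]
  refine ⟨fun hxy => ?_, fun hxy => ?_, fun hxy => ?_, fun hxy => ?_⟩
  · subst hxy
    rw [hheat, distQuantile_preimage_Ici_dist_self_inter_Ioi, hscale, hIoi]
  · rw [hheat, distQuantile_preimage_Ici_dist_inter_Ioi hσ hxy, hscale, hIoc]
  · subst hxy
    rw [hheat, distQuantile_preimage_Ici_dist_self_inter_Ioi]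
  · rw [hheat, distQuantile_preimage_Ici_dist_inter_Ioi hσ hxy]

theorem statement_6
    {X : Type*} [MetricSpace X] [TopologicalSpace.SeparableSpace X]
    [MeasurableSpace X] [BorelSpace X]
    (hd : ∀ x y z : X, dist x z ≤ max (dist x y) (dist y z))
    (hcb : ∀ (x : X) (r : ℝ), IsCompact (closedBall x r))
    (μ : Measure X)
    (hμpos : ∀ (x : X) (r : ℝ), 0 < r → 0 < μ (closedBall x r))
    (hμfin : ∀ (x : X) (r : ℝ), 0 < r → μ (closedBall x r) < ⊤)
    (σ : ℝ → ℝ)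
    (hσmono : StrictMonoOn σ (Set.Ici 0))
    (hσrange : ∀ r : ℝ, 0 ≤ r → σ r ∈ Set.Icc (0:ℝ) 1)
    (hσlc : ∀ r : ℝ, 0 < r → ContinuousWithinAt σ (Set.Iic r) r)
    (hσzero : Tendsto σ (nhdsWithin 0 (Set.Ioi 0)) (nhds 0))
    (hσtop : Tendsto σ atTop (nhds 1))
    (ν : ℝ → Measure ℝ)
    (hν : ∀ t : ℝ, 0 < t → ∀ a b : ℝ, 0 ≤ a → a ≤ b →
      ν t (Set.Ico a b) = ENNReal.ofReal (σ b ^ t - σ a ^ t))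
    (hνneg : ∀ t : ℝ, 0 < t → ν t (Set.Iio 0) = 0)
    (t : ℝ) (ht : 0 < t) (x y : X) :
    (x = y → heatK μ ν t x y =
      ∫⁻ s in Set.Ioi (0:ℝ), specN μ σ x (s / t) * ENNReal.ofReal (Real.exp (-s))) ∧
    (x ≠ y → heatK μ ν t x y =
      ∫⁻ s in Set.Ioc (0:ℝ) (t / dstar σ x y),
        specN μ σ x (s / t) * ENNReal.ofReal (Real.exp (-s))) ∧
    (x = y → heatK μ ν t x y =
      ENNReal.ofReal t *
        ∫⁻ τ in Set.Ioi (0:ℝ), specN μ σ x τ * ENNReal.ofReal (Real.exp (-(τ * t)))) ∧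
    (x ≠ y → heatK μ ν t x y =
      ENNReal.ofReal t *
        ∫⁻ τ in Set.Ioc (0:ℝ) (1 / dstar σ x y),
          specN μ σ x τ * ENNReal.ofReal (Real.exp (-(τ * t)))) :=
  statement_6_general μ σ hσmono hσrange hσlc hσzero hσtop ν hν hνneg t ht x y
end
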